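/- arXiv:1708.03042 — 2 statements merged into one kernel-verified Lean document; each statement's English description precedes it below -/
import Mathlib

section
/- Let 𝒞 be a category with all small colimits and let F : WalkingSpan ⥤ 𝒞 be a span diagram with F(left) = A, F(zero) = B, F(right) = C. Let i : WalkingSpan ⥤ Δᵒᵖ be the functor sending left and right to [0], zero to [1], and the morphisms fst, snd to the opposites of the two coface maps δ¹, δ⁰ : [0] → [1]. Then the (pointwise) left Kan extension Lan_i F : Δᵒᵖ ⥤ 𝒞 exists and, for every natural number n, its value at [n] is isomorphic to the coproduct A ⨿ (⨿_{j ∈ Fin n} B) ⨿ C of A, n copies of B, and C. -/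
/-!
The objects of the comma category `barIndex ↓ [n]` are the unique arrows `[n] ⟶ [0]` over
`left` and over `right`, and the `n + 2` maps `[n] ⟶ [1]` over `zero`, classified by their number
of zeros. The only non-identity morphisms go from the constant map `0` to the object over `left`
and from the constant map `1` to the object over `right`. The comma category is therefore the
disjoint union of two arrows and `n` isolated objects, each component has a terminal object, and
the colimit is the coproduct of the values at these: `A`, `n` copies of `B`, and `C`.
-/

open CategoryTheory CategoryTheory.Limits Opposite

universe v u

/-- The functor `WalkingSpan ⥤ Δᵒᵖ` sending `left` and `right` to `[0]`, `zero` to `[1]`,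
and the morphisms `fst`, `snd` to the opposites of the coface maps
`δ¹, δ⁰ : [0] ⟶ [1]` respectively. -/
noncomputable def barIndex : WalkingSpan ⥤ SimplexCategoryᵒᵖ :=
  span (SimplexCategory.δ (1 : Fin 2)).op (SimplexCategory.δ (0 : Fin 2)).op

open Simplicial

namespace SimplexCategory

lemma comp_δ_one_eq_toMk₁_last {n : ℕ} (f : ⦋n⦌ ⟶ ⦋0⦌) :
    f ≫ δ 1 = toMk₁ (Fin.last (n + 1)) :=
  ConcreteCategory.hom_ext _ _ fun i => by
    rw [toMk₁_of_castSucc_lt _ i (Fin.castSucc_lt_last i), Subsingleton.elim f (const _ _ 0)]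
    rfl

lemma comp_δ_zero_eq_toMk₁_zero {n : ℕ} (f : ⦋n⦌ ⟶ ⦋0⦌) : f ≫ δ 0 = toMk₁ 0 :=
  ConcreteCategory.hom_ext _ _ fun i => by
    rw [toMk₁_of_le_castSucc _ i (Fin.zero_le _), Subsingleton.elim f (const _ _ 0)]
    rfl

end SimplexCategory

namespace barIndex

open SimplexCategory

variable (n : ℕ)

noncomputable def arrowLeft : CostructuredArrow barIndex (op ⦋n⦌) :=
  CostructuredArrow.mk (Y := WalkingSpan.left) (const ⦋n⦌ ⦋0⦌ 0).op

noncomputable def arrowRight : CostructuredArrow barIndex (op ⦋n⦌) :=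
  CostructuredArrow.mk (Y := WalkingSpan.right) (const ⦋n⦌ ⦋0⦌ 0).op

noncomputable def arrowZero (k : Fin (n + 2)) : CostructuredArrow barIndex (op ⦋n⦌) :=
  CostructuredArrow.mk (Y := WalkingSpan.zero) (toMk₁ k).op

lemma arrow_cases (X : CostructuredArrow barIndex (op ⦋n⦌)) :
    X = arrowLeft n ∨ X = arrowRight n ∨ ∃ k, X = arrowZero n k := by
  obtain ⟨_ | _ | _, ⟨⟨⟩⟩, f⟩ := X
  · obtain ⟨k, hk⟩ := toMk₁_surjective f.unop
    exact Or.inr (Or.inr ⟨k, by rw [arrowZero, hk]; rfl⟩)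
  all_goals obtain rfl : f = (const ⦋n⦌ ⦋0⦌ 0).op :=
    Quiver.Hom.unop_inj (Subsingleton.elim (α := ⦋n⦌ ⟶ ⦋0⦌) _ _)
  · exact Or.inl rfl
  · exact Or.inr (Or.inl rfl)

noncomputable def arrowZeroLastToLeft : arrowZero n (Fin.last (n + 1)) ⟶ arrowLeft n :=
  CostructuredArrow.homMk WalkingSpan.Hom.fst
    (congrArg Quiver.Hom.op (comp_δ_one_eq_toMk₁_last _))

noncomputable def arrowZeroZeroToRight : arrowZero n 0 ⟶ arrowRight n :=
  CostructuredArrow.homMk WalkingSpan.Hom.snd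
    (congrArg Quiver.Hom.op (comp_δ_zero_eq_toMk₁_zero _))

section Cocone

variable {C : Type u} [Category.{v} C] [HasFiniteCoproducts C] (F : WalkingSpan ⥤ C)

noncomputable abbrev coprodPt : C :=
  F.obj WalkingSpan.left ⨿
    ((∐ fun (_ : Fin n) => F.obj WalkingSpan.zero) ⨿ F.obj WalkingSpan.right)

noncomputable def zeroInj (i : Fin n) : F.obj WalkingSpan.zero ⟶ coprodPt n F :=
  Sigma.ι (fun (_ : Fin n) => F.obj WalkingSpan.zero) i ≫ coprod.inl ≫ coprod.inr

/-- `toMk₁ k` takes the value `0` exactly `k` times, so `k = 0` and `k = n + 1` are the constant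
maps `1` and `0`, the only objects over `zero` with a morphism to the objects over `right` and
`left`. -/
noncomputable def zeroLeg : Fin (n + 2) → (F.obj WalkingSpan.zero ⟶ coprodPt n F) :=
  Fin.cases (F.map WalkingSpan.Hom.snd ≫ coprod.inr ≫ coprod.inr) <|
    Fin.lastCases (F.map WalkingSpan.Hom.fst ≫ coprod.inl) (zeroInj n F)

lemma zeroLeg_zero : zeroLeg n F 0 = F.map WalkingSpan.Hom.snd ≫ coprod.inr ≫ coprod.inr :=
  Fin.cases_zero

lemma zeroLeg_last :
    zeroLeg n F (Fin.last (n + 1)) = F.map WalkingSpan.Hom.fst ≫ coprod.inl := by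
  rw [zeroLeg, ← Fin.succ_last, Fin.cases_succ, Fin.lastCases_last]

lemma zeroLeg_succ_castSucc (i : Fin n) : zeroLeg n F i.castSucc.succ = zeroInj n F i := by
  rw [zeroLeg, Fin.cases_succ, Fin.lastCases_castSucc]

noncomputable def leg (X : CostructuredArrow barIndex (op ⦋n⦌)) :
    F.obj X.left ⟶ coprodPt n F :=
  match X with
  | ⟨none, _, f⟩ => zeroLeg n F (toMk₁Equiv.symm f.unop)
  | ⟨some .left, _, _⟩ => coprod.inl
  | ⟨some .right, _, _⟩ => coprod.inr ≫ coprod.inr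

lemma leg_arrowZero (k : Fin (n + 2)) : leg n F (arrowZero n k) = zeroLeg n F k :=
  congrArg (zeroLeg n F) (toMk₁Equiv.symm_apply_apply k)

lemma leg_naturality {X Y : CostructuredArrow barIndex (op ⦋n⦌)} (g : X ⟶ Y) :
    F.map g.left ≫ leg n F Y = leg n F X := by
  obtain ⟨_, ⟨⟨⟩⟩, f⟩ := X
  obtain ⟨_, ⟨⟨⟩⟩, f'⟩ := Y
  obtain ⟨g, ⟨⟨⟩⟩, w⟩ := g
  change WidePushoutShape.Hom _ _ at g
  have hw : f = barIndex.map g ≫ f' := by simpa using w.symm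
  rcases g with _ | (_ | _)
  · obtain rfl : f = f' := by simpa using hw
    exact (congrArg (· ≫ _) (F.map_id _)).trans (Category.id_comp _)
  · obtain rfl : f = (toMk₁ (Fin.last (n + 1))).op :=
      hw.trans (congrArg Quiver.Hom.op (comp_δ_one_eq_toMk₁_last f'.unop))
    exact ((leg_arrowZero n F _).trans (zeroLeg_last n F)).symm
  · obtain rfl : f = (toMk₁ 0).op :=
      hw.trans (congrArg Quiver.Hom.op (comp_δ_zero_eq_toMk₁_zero f'.unop))
    exact ((leg_arrowZero n F _).trans (zeroLeg_zero n F)).symm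

noncomputable def coprodCocone : Cocone (CostructuredArrow.proj barIndex (op ⦋n⦌) ⋙ F) where
  pt := coprodPt n F
  ι :=
    { app := leg n F
      naturality := fun _ _ g => (leg_naturality n F g).trans (Category.comp_id _).symm }

lemma coprodCocone_ι_app_arrowZero_succ_castSucc (i : Fin n) :
    (coprodCocone n F).ι.app (arrowZero n i.castSucc.succ) = zeroInj n F i :=
  (leg_arrowZero n F _).trans (zeroLeg_succ_castSucc n F i)

lemma coprodCocone_hom_ext {W : C} {f g : coprodPt n F ⟶ W}
    (h : ∀ X, (coprodCocone n F).ι.app X ≫ f = (coprodCocone n F).ι.app X ≫ g) : f = g := by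
  have h_left : coprod.inl ≫ f = coprod.inl ≫ g := h (arrowLeft n)
  have h_right : (coprod.inr ≫ coprod.inr) ≫ f = (coprod.inr ≫ coprod.inr) ≫ g :=
    h (arrowRight n)
  have h_zero (i : Fin n) : zeroInj n F i ≫ f = zeroInj n F i ≫ g := by
    rw [← coprodCocone_ι_app_arrowZero_succ_castSucc]
    exact h _
  refine coprod.hom_ext h_left (coprod.hom_ext (Sigma.hom_ext _ _ fun i => ?_) ?_)
  · simpa [zeroInj] using h_zero i
  · simpa using h_right

noncomputable def coprodCoconeDesc
    (s : Cocone (CostructuredArrow.proj barIndex (op ⦋n⦌) ⋙ F)) : coprodPt n F ⟶ s.pt :=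
  coprod.desc (s.ι.app (arrowLeft n)) <|
    coprod.desc (Sigma.desc fun i => s.ι.app (arrowZero n i.castSucc.succ))
      (s.ι.app (arrowRight n))

lemma coprodCocone_ι_app_comp_desc
    (s : Cocone (CostructuredArrow.proj barIndex (op ⦋n⦌) ⋙ F))
    (X : CostructuredArrow barIndex (op ⦋n⦌)) :
    (coprodCocone n F).ι.app X ≫ coprodCoconeDesc n F s = s.ι.app X := by
  have h_left : coprod.inl ≫ coprodCoconeDesc n F s = s.ι.app (arrowLeft n) :=
    coprod.inl_desc _ _
  have h_right : (coprod.inr ≫ coprod.inr) ≫ coprodCoconeDesc n F s = s.ι.app (arrowRight n) :=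
    (Category.assoc _ _ _).trans <| (congrArg _ (coprod.inr_desc _ _)).trans (coprod.inr_desc _ _)
  have h_zero (i : Fin n) :
      zeroInj n F i ≫ coprodCoconeDesc n F s = s.ι.app (arrowZero n i.castSucc.succ) :=
    (Category.assoc _ _ _).trans <| (congrArg _ <| (Category.assoc _ _ _).trans <|
      (congrArg _ (coprod.inr_desc _ _)).trans (coprod.inl_desc _ _)).trans (Sigma.ι_desc _ _)
  obtain rfl | rfl | ⟨k, rfl⟩ := arrow_cases n X
  · exact h_left
  · exact h_right
  induction k using Fin.cases with
  | zero =>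
    rw [← (coprodCocone n F).w (arrowZeroZeroToRight n), ← s.w (arrowZeroZeroToRight n)]
    exact (Category.assoc _ _ _).trans (congrArg _ h_right)
  | succ j =>
    induction j using Fin.lastCases with
    | last =>
      rw [Fin.succ_last, ← (coprodCocone n F).w (arrowZeroLastToLeft n),
        ← s.w (arrowZeroLastToLeft n)]
      exact (Category.assoc _ _ _).trans (congrArg _ h_left)
    | cast i =>
      rw [coprodCocone_ι_app_arrowZero_succ_castSucc]
      exact h_zero i

noncomputable def isColimitCoprodCocone : IsColimit (coprodCocone n F) where
  desc := coprodCoconeDesc n F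
  fac := coprodCocone_ι_app_comp_desc n F
  uniq s _ hm := coprodCocone_hom_ext n F fun X =>
    (hm X).trans (coprodCocone_ι_app_comp_desc n F s X).symm

end Cocone

end barIndex

/-- Lemma A.1 (pointwise description): the left Kan extension of a span diagram `F` along
`barIndex` exists and its value at `[n]` is `A ⨿ Bⁿ ⨿ C`. -/
theorem leftKanExtension_along_barIndex_obj
    {C : Type u} [Category.{v} C] [HasColimits C] (F : WalkingSpan ⥤ C) :
    barIndex.HasPointwiseLeftKanExtension F ∧
      ∀ n : ℕ,
        Nonempty ((barIndex.pointwiseLeftKanExtension F).obj (op (SimplexCategory.mk n)) ≅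
          F.obj WalkingSpan.left ⨿
            ((∐ fun (_ : Fin n) => F.obj WalkingSpan.zero) ⨿ F.obj WalkingSpan.right)) :=
  ⟨inferInstance, fun n => ⟨colimit.isoColimitCocone
    ⟨barIndex.coprodCocone n F, barIndex.isColimitCoprodCocone n F⟩⟩⟩
end

section
/- Let D be a sifted category and let n be a positive natural number. Then the n-fold diagonal functor D ⥤ ∏_{i : Fin n} D, sending an object d to the constant tuple (d, d, …, d) and a morphism to the constant tuple of that morphism, is a final functor. -/
open CategoryTheory

universe v u

namespace FinalPiAux

open CategoryTheory.Functor

section ProdFinal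

variable {A : Type*} [Category A] {B : Type*} [Category B]
  {C : Type*} [Category C] {E : Type*} [Category E]
  (F : A ⥤ B) (G : C ⥤ E)

/-- Lifting structured arrows over `F` to structured arrows over `F.prod G`,
fixing the second component. -/
@[simps]
def liftL (b : B) (e : E) {c : C} (h : e ⟶ G.obj c) :
    StructuredArrow b F ⥤ StructuredArrow (b, e) (F.prod G) where
  obj u := StructuredArrow.mk (Y := (u.right, c))
    ((u.hom, h) : (b, e) ⟶ (F.prod G).obj (u.right, c))
  map {u v} φ := StructuredArrow.homMk (φ.right, 𝟙 c)
    (Prod.ext (by simpa using StructuredArrow.w φ) (by simp))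

/-- Lifting structured arrows over `G` to structured arrows over `F.prod G`,
fixing the first component. -/
@[simps]
def liftR (b : B) (e : E) {a : A} (h : b ⟶ F.obj a) :
    StructuredArrow e G ⥤ StructuredArrow (b, e) (F.prod G) where
  obj u := StructuredArrow.mk (Y := (a, u.right))
    ((h, u.hom) : (b, e) ⟶ (F.prod G).obj (a, u.right))
  map {u v} φ := StructuredArrow.homMk (𝟙 a, φ.right)
    (Prod.ext (by simp) (by simpa using StructuredArrow.w φ))

theorem prod_final [F.Final] [G.Final] : (F.prod G).Final := by
  constructor
  rintro ⟨b, e⟩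
  have : Nonempty (StructuredArrow (b, e) (F.prod G)) := by
    obtain ⟨u⟩ := (inferInstance : IsConnected (StructuredArrow b F)).is_nonempty
    obtain ⟨v⟩ := (inferInstance : IsConnected (StructuredArrow e G)).is_nonempty
    exact ⟨(liftL F G b e v.hom).obj u⟩
  apply zigzag_isConnected
  intro X Y
  have z1 : Zigzag X ((liftL F G b e (c := X.right.2) X.hom.2).obj
      (StructuredArrow.mk Y.hom.1)) :=
    zigzag_obj_of_zigzag (liftL F G b e (c := X.right.2) X.hom.2)
      (isPreconnected_zigzag (StructuredArrow.mk X.hom.1) (StructuredArrow.mk Y.hom.1))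
  have z2 : Zigzag ((liftR F G b e (a := Y.right.1) Y.hom.1).obj
      (StructuredArrow.mk X.hom.2)) Y :=
    zigzag_obj_of_zigzag (liftR F G b e (a := Y.right.1) Y.hom.1)
      (isPreconnected_zigzag (StructuredArrow.mk X.hom.2) (StructuredArrow.mk Y.hom.2))
  exact z1.trans z2

end ProdFinal

section Cons

variable (D : Type u) [Category.{v} D] (n : ℕ)

/-- The functor `D × (Fin n → D) ⥤ (Fin (n+1) → D)` given by `Fin.cons`. -/
def consFunctor : (D × (∀ _ : Fin n, D)) ⥤ (∀ _ : Fin (n + 1), D) where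
  obj X := Fin.cons (α := fun _ => D) X.1 X.2
  map {X Y} f := Fin.cons
    (α := fun i => Fin.cons (α := fun _ => D) X.1 X.2 i ⟶ Fin.cons (α := fun _ => D) Y.1 Y.2 i)
    f.1 f.2
  map_id X := by funext i; refine Fin.cases rfl (fun j => rfl) i
  map_comp f g := by funext i; refine Fin.cases rfl (fun j => rfl) i

instance : (consFunctor D n).Faithful :=
  ⟨fun {X Y} {f g} h =>
    Prod.ext (congrFun h 0) (funext fun j => congrFun h j.succ)⟩

instance : (consFunctor D n).Full :=
  ⟨fun {X Y} h =>
    ⟨(h 0, fun j => h j.succ), by funext i; refine Fin.cases rfl (fun j => rfl) i⟩⟩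

instance : (consFunctor D n).EssSurj :=
  ⟨fun g => ⟨(g 0, fun j => g j.succ),
    ⟨eqToIso (funext fun i => Fin.cases rfl (fun j => rfl) i)⟩⟩⟩

instance : (consFunctor D n).IsEquivalence := {}

end Cons

variable (D : Type u) [Category.{v} D] [IsSifted D]

theorem final_one : (Functor.pi' (fun _ : Fin 1 => 𝟭 D)).Final := by
  have : (Functor.pi' (fun _ : Fin 1 => 𝟭 D)).Faithful :=
    ⟨fun {X Y} {f g} h => congrFun h 0⟩
  have : (Functor.pi' (fun _ : Fin 1 => 𝟭 D)).Full :=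
    ⟨fun {X Y} h => ⟨h 0, funext fun i => Fin.cases rfl (fun j => j.elim0) i⟩⟩
  have : (Functor.pi' (fun _ : Fin 1 => 𝟭 D)).EssSurj :=
    ⟨fun g => ⟨g 0, ⟨eqToIso (funext fun i => Fin.cases rfl (fun j => j.elim0) i)⟩⟩⟩
  have : (Functor.pi' (fun _ : Fin 1 => 𝟭 D)).IsEquivalence := {}
  infer_instance

theorem final_succ : ∀ n : ℕ, (Functor.pi' (fun _ : Fin (n + 1) => 𝟭 D)).Final := by
  intro n
  induction n with
  | zero => exact final_one D
  | succ m ih =>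
    have hdiag : (Functor.diag D).Final := inferInstance
    have hprod : ((𝟭 D).prod (Functor.pi' (fun _ : Fin (m + 1) => 𝟭 D))).Final :=
      prod_final _ _
    have hcomp : (Functor.diag D ⋙
        (𝟭 D).prod (Functor.pi' (fun _ : Fin (m + 1) => 𝟭 D)) ⋙
        consFunctor D (m + 1)).Final := by
      infer_instance
    refine Functor.final_of_natIso (F := Functor.diag D ⋙
        (𝟭 D).prod (Functor.pi' (fun _ : Fin (m + 1) => 𝟭 D)) ⋙
        consFunctor D (m + 1)) ?_
    refine NatIso.pi' (fun i => ?_)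
    refine Fin.cases (motive := fun i =>
      ((Functor.diag D ⋙ (𝟭 D).prod (Functor.pi' (fun _ : Fin (m + 1) => 𝟭 D)) ⋙
          consFunctor D (m + 1)) ⋙ Pi.eval _ i) ≅
        (Functor.pi' (fun _ : Fin (m + 2) => 𝟭 D) ⋙ Pi.eval _ i))
      (Iso.refl _) (fun j => Iso.refl _) i

end FinalPiAux

/-- The `n`-fold diagonal functor of a sifted category is final, for `n > 0`. -/
theorem final_pi_diagonal_of_isSifted (D : Type u) [Category.{v} D] [IsSifted D]
    (n : ℕ) (hn : 0 < n) :
    (Functor.pi' (fun _ : Fin n => 𝟭 D)).Final := by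
  cases n with
  | zero => omega
  | succ m => exact FinalPiAux.final_succ D m
end
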